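/- arXiv:2012.11467 — 2 statements merged into one kernel-verified Lean document; each statement's English description precedes it below -/
import Mathlib

section
/- Fix δ ∈ (0,1/3) and an integer r ≥ 1. For every ε > 0 there exists A < ∞ (depending only on δ, r, ε) such that for all reals a ≤ −A, every integer T with r ≤ T < ∞, every b ∈ ℝ satisfying |b − a|·r/T ≤ (a⁻ + 1)^{1−δ}, and every δ-decorated random walk bridge (S_k)_{k=0}^T, (D_k)_{k=1}^T from a to b of length T, one has | ℓ_{T,r}(a,b)/a⁻ − 1 | ≤ ε. -/
/-!
For fixed `r` and `a → -∞` the first `r` steps of the bridge stay within `o(|a|)` of `a`: the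
means of `S₁, …, S_r` differ from `a` by at most `δ⁻² |b - a| r / T ≤ δ⁻² (a⁻ + 1)^(1-δ)`, their
variances are at most `δ⁻¹ r`, and a decoration `D_k`, `k ≤ r`, exceeds its (A3) threshold (at
most `δ⁻¹ r`) by `|a|/4` with probability at most `δ⁻¹ exp (-(|a|/4)^δ)`. By Chebyshev, the
event `{max_{k ≤ r} (S_k + D_k) ≤ 0}` therefore fails with probability
`O(r² / a²) + O(r exp (-(|a|/4)^δ))`, and on that event `S_r⁻` differs from `a⁻` by at most
`|S_r - a|`, whose mean is `o(|a|)`.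
-/

open MeasureTheory ProbabilityTheory

noncomputable section

/-- The negative part `x⁻ = max (-x) 0` of a real number. -/
def nneg (x : ℝ) : ℝ := max (-x) 0

/-- Partial sums `s j = σ²₁ + ⋯ + σ²ⱼ` of the step variances. -/
def psum (σsq : ℕ → ℝ) (j : ℕ) : ℝ := ∑ i ∈ Finset.Icc 1 j, σsq i

/-- A `δ`-decorated random walk bridge from `a` to `b` of length `T` on `(Ω, P)`:
step variances `σsq k ∈ (δ, δ⁻¹)`; `(S k)` a Gaussian process with the bridge mean and
covariance structure (A1); the Markov-type conditional independence property (A2); and the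
stretched-exponential decoration tails (A3). -/
structure DecoratedBridge (δ : ℝ) (T : ℕ) (a b : ℝ)
    {Ω : Type*} [MeasurableSpace Ω] (P : Measure Ω) where
  σsq : ℕ → ℝ
  S : ℕ → Ω → ℝ
  D : ℕ → Ω → ℝ
  meas_S : ∀ k, Measurable (S k)
  meas_D : ∀ k, Measurable (D k)
  σsq_mem : ∀ k, 1 ≤ k → k ≤ T → σsq k ∈ Set.Ioo δ δ⁻¹
  gaussian_lin : ∀ c : ℕ → ℝ, ∃ (m : ℝ) (v : NNReal),
    P.map (fun ω => ∑ k ∈ Finset.range (T + 1), c k * S k ω) = gaussianReal m v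
  mean_S : ∀ k, k ≤ T →
    ∫ ω, S k ω ∂P = (b * psum σsq k + a * (psum σsq T - psum σsq k)) / psum σsq T
  cov_S : ∀ k m, k ≤ m → m ≤ T →
    ∫ ω, (S k ω - ∫ ω', S k ω' ∂P) * (S m ω - ∫ ω', S m ω' ∂P) ∂P
      = psum σsq k * (psum σsq T - psum σsq m) / psum σsq T
  condIndep : ∀ m, 1 ≤ m → m ≤ T - 1 → ∀ A B : Set Ω,
    MeasurableSet[MeasurableSpace.comap
      (fun ω => fun k : Finset.Icc 1 m => (S k.1 ω, D k.1 ω)) inferInstance] A →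
    MeasurableSet[MeasurableSpace.comap
      (fun ω => fun k : Set.Ioc m T => S k.1 ω) inferInstance] B →
    MeasureTheory.condExp (MeasurableSpace.comap (S m) inferInstance) P
        ((A ∩ B).indicator fun _ => (1 : ℝ))
      =ᵐ[P] fun ω =>
        MeasureTheory.condExp (MeasurableSpace.comap (S m) inferInstance) P
          (A.indicator fun _ => (1 : ℝ)) ω *
        MeasureTheory.condExp (MeasurableSpace.comap (S m) inferInstance) P
          (B.indicator fun _ => (1 : ℝ)) ω
  dec_tail : ∀ k, 1 ≤ k → k ≤ T → ∀ t : ℝ, 0 < t →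
    (P {ω | δ⁻¹ * ((min k (T - k) : ℕ) : ℝ) ^ ((1 : ℝ) / 2 - δ) + t < |D k ω|}).toReal
      ≤ δ⁻¹ * Real.exp (-t ^ δ)


/-- The functional `ℓ_{T,r}(a,b) = E[ S_r⁻ · 1{ max_{1 ≤ k ≤ r}(S_k + D_k) ≤ 0 } ]`. -/
def DecoratedBridge.ell {δ : ℝ} {T : ℕ} {a b : ℝ} {Ω : Type*} [MeasurableSpace Ω]
    {P : Measure Ω} (B : DecoratedBridge δ T a b P) (r : ℕ) : ℝ :=
  ∫ ω, nneg (B.S r ω) *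
    Set.indicator {ω' | ∀ k, 1 ≤ k → k ≤ r → B.S k ω' + B.D k ω' ≤ 0} (fun _ => (1 : ℝ)) ω ∂P

open Real Filter Topology
open scoped ENNReal

lemma tendsto_add_one_rpow_div_atTop {δ : ℝ} (hδ : 0 < δ) :
    Tendsto (fun m : ℝ => (m + 1) ^ (1 - δ) / m) atTop (𝓝 0) := by
  have h : Tendsto (fun m : ℝ => (m + 1) ^ (-δ) * (1 + m⁻¹)) atTop (𝓝 (0 * (1 + 0))) :=
    ((tendsto_rpow_neg_atTop hδ).comp (tendsto_atTop_add_const_right _ 1 tendsto_id)).mul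
      (tendsto_const_nhds.add tendsto_inv_atTop_zero)
  rw [zero_mul] at h
  refine h.congr' ?_
  filter_upwards [eventually_gt_atTop 0] with m hm
  rw [show (1 : ℝ) - δ = -δ + 1 by ring, rpow_add (by linarith), rpow_one]
  field_simp

lemma tendsto_affine_rpow_div_atTop {δ : ℝ} (hδ : 0 < δ) (C₁ C₂ : ℝ) :
    Tendsto (fun m : ℝ => (C₁ + C₂ * (m + 1) ^ (1 - δ)) / m) atTop (𝓝 0) := by
  have h := ((tendsto_const_nhds (x := C₁)).div_atTop tendsto_id).add
    ((tendsto_add_one_rpow_div_atTop hδ).const_mul C₂)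
  rw [mul_zero, add_zero] at h
  exact h.congr fun m => by simp only [id]; ring

lemma tendsto_error_atTop {δ : ℝ} (hδ : 0 < δ) (C₁ C₂ C₃ C₄ : ℝ) :
    Tendsto (fun m : ℝ => (C₁ + C₂ * (m + 1) ^ (1 - δ)) / m + C₃ / m ^ 2
      + C₄ * exp (-(m / 4) ^ δ)) atTop (𝓝 0) := by
  have h₂ : Tendsto (fun m : ℝ => C₃ / m ^ 2) atTop (𝓝 0) :=
    tendsto_const_nhds.div_atTop (tendsto_pow_atTop two_ne_zero)
  have h₃ : Tendsto (fun m : ℝ => C₄ * exp (-(m / 4) ^ δ)) atTop (𝓝 0) := by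
    simpa using (tendsto_exp_atBot.comp (tendsto_neg_atTop_atBot.comp
      ((tendsto_rpow_atTop hδ).comp (tendsto_id.atTop_div_const (by norm_num))))).const_mul C₄
  simpa using ((tendsto_affine_rpow_div_atTop hδ C₁ C₂).add h₂).add h₃

lemma rpow_le_of_le_of_exponent_le_one {x y p : ℝ} (hx : 0 ≤ x) (hxy : x ≤ y) (hy : 1 ≤ y)
    (hp₀ : 0 ≤ p) (hp₁ : p ≤ 1) : x ^ p ≤ y :=
  (rpow_le_rpow hx hxy hp₀).trans ((rpow_le_rpow_of_exponent_le hy hp₁).trans_eq (rpow_one y))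

lemma nneg_nonneg (x : ℝ) : 0 ≤ nneg x := le_max_right _ _

lemma abs_nneg_sub_nneg_le (x y : ℝ) : |nneg x - nneg y| ≤ |x - y| := by
  have h := abs_max_sub_max_le_abs (-x) (-y) 0
  rwa [neg_sub_neg, abs_sub_comm y x] at h

lemma compl_setOf_forall_add_nonpos_subset {Ω : Type*} (S D : ℕ → Ω → ℝ) (μ θ : ℕ → ℝ)
    {t : ℝ} {r : ℕ} (h : ∀ k, 1 ≤ k → k ≤ r → μ k + θ k + 2 * t ≤ 0) :
    {ω | ∀ k, 1 ≤ k → k ≤ r → S k ω + D k ω ≤ 0}ᶜ ⊆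
      ⋃ k ∈ Finset.Icc 1 r, ({ω | t ≤ |S k ω - μ k|} ∪ {ω | θ k + t < |D k ω|}) := by
  intro ω hω
  simp only [Set.mem_compl_iff, Set.mem_ofPred_eq, not_forall, not_le] at hω
  obtain ⟨k, hk1, hkr, hpos⟩ := hω
  simp only [Set.mem_iUnion, Set.mem_union, Set.mem_ofPred_eq, Finset.mem_Icc]
  refine ⟨k, ⟨hk1, hkr⟩, ?_⟩
  by_contra! hsmall
  linarith [h k hk1 hkr, le_abs_self (S k ω - μ k), le_abs_self (D k ω), hsmall.1, hsmall.2]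

section Integral

variable {Ω : Type*} [MeasurableSpace Ω] {P : Measure Ω} [IsProbabilityMeasure P]

lemma abs_integral_nneg_mul_indicator_sub_le {X : Ω → ℝ} (hX : Integrable X P) {E : Set Ω}
    (hE : MeasurableSet E) (a : ℝ) :
    |∫ ω, nneg (X ω) * E.indicator (fun _ => (1 : ℝ)) ω ∂P - nneg a| ≤
      ∫ ω, |X ω - a| ∂P + nneg a * P.real Eᶜ := by
  have h1 : ∀ ω, ‖E.indicator (fun _ => (1 : ℝ)) ω‖ ≤ 1 := fun ω => by
    by_cases hω : ω ∈ E <;> simp [hω]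
  have hXa : Integrable (fun ω => |X ω - a|) P := (hX.sub (integrable_const a)).abs
  have hEc : Integrable (fun ω => nneg a * Eᶜ.indicator (fun _ => (1 : ℝ)) ω) P :=
    ((integrable_const 1).indicator hE.compl).const_mul _
  have hf : Integrable (fun ω => nneg (X ω) * E.indicator (fun _ => (1 : ℝ)) ω) P :=
    hX.neg.pos_part.mul_bdd (stronglyMeasurable_const.indicator hE).aestronglyMeasurable
      (ae_of_all _ h1)
  calc |∫ ω, nneg (X ω) * E.indicator (fun _ => (1 : ℝ)) ω ∂P - nneg a|
      = |∫ ω, (nneg (X ω) * E.indicator (fun _ => (1 : ℝ)) ω - nneg a) ∂P| := by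
        rw [integral_sub hf (integrable_const _), integral_const, probReal_univ, one_smul]
    _ ≤ ∫ ω, |nneg (X ω) * E.indicator (fun _ => (1 : ℝ)) ω - nneg a| ∂P :=
        abs_integral_le_integral_abs
    _ ≤ ∫ ω, (|X ω - a| + nneg a * Eᶜ.indicator (fun _ => (1 : ℝ)) ω) ∂P := by
        refine integral_mono (hf.sub (integrable_const _)).abs (hXa.add hEc) fun ω => ?_
        by_cases hω : ω ∈ E
        · simpa [hω] using abs_nneg_sub_nneg_le (X ω) a
        · simp [hω, abs_of_nonneg (nneg_nonneg a)]
    _ = ∫ ω, |X ω - a| ∂P + nneg a * P.real Eᶜ := by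
        rw [integral_add hXa hEc, integral_const_mul, integral_indicator_const _ hE.compl,
          smul_eq_mul, mul_one]

lemma integral_abs_sub_le {X : Ω → ℝ} (hX : MemLp X 2 P) (a : ℝ) :
    ∫ ω, |X ω - a| ∂P ≤ Var[X; P] + 1 + |P[X] - a| := by
  have hX₀ : MemLp (fun ω => X ω - P[X]) 2 P := hX.sub (memLp_const _)
  have hsq : Integrable (fun ω => (X ω - P[X]) ^ 2 + 1) P :=
    hX₀.integrable_sq.add (integrable_const 1)
  calc ∫ ω, |X ω - a| ∂P ≤ ∫ ω, ((X ω - P[X]) ^ 2 + 1 + |P[X] - a|) ∂P := by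
        refine integral_mono ((hX.integrable one_le_two).sub (integrable_const a)).abs
          (hsq.add (integrable_const _)) fun ω => ?_
        have := abs_sub_le (X ω) P[X] a
        nlinarith [sq_nonneg (|X ω - P[X]| - 1), sq_abs (X ω - P[X])]
    _ = Var[X; P] + 1 + |P[X] - a| := by
        rw [integral_add hsq (integrable_const _),
          integral_add hX₀.integrable_sq (integrable_const 1), variance_eq_integral hX.aemeasurable]
        simp

end Integral

namespace DecoratedBridge

variable {δ : ℝ} {T : ℕ} {a b : ℝ} {Ω : Type*} [MeasurableSpace Ω] {P : Measure Ω}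
  (B : DecoratedBridge δ T a b P) {k : ℕ}

def nonposEvent (r : ℕ) : Set Ω := {ω | ∀ k, 1 ≤ k → k ≤ r → B.S k ω + B.D k ω ≤ 0}

lemma measurableSet_nonposEvent (r : ℕ) : MeasurableSet (B.nonposEvent r) := by
  simp only [nonposEvent, Set.ofPred_forall]
  exact .iInter fun k => .iInter fun _ => .iInter fun _ =>
    measurableSet_le ((B.meas_S k).add (B.meas_D k)) measurable_const

lemma psum_le (hk : k ≤ T) : psum B.σsq k ≤ δ⁻¹ * k := by
  have := Finset.sum_le_sum fun i (hi : i ∈ Finset.Icc 1 k) =>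
    (B.σsq_mem i (Finset.mem_Icc.1 hi).1 ((Finset.mem_Icc.1 hi).2.trans hk)).2.le
  simpa [psum, mul_comm] using this

lemma mul_le_psum (hk : k ≤ T) : δ * k ≤ psum B.σsq k := by
  have := Finset.sum_le_sum fun i (hi : i ∈ Finset.Icc 1 k) =>
    (B.σsq_mem i (Finset.mem_Icc.1 hi).1 ((Finset.mem_Icc.1 hi).2.trans hk)).1.le
  simpa [psum, mul_comm] using this

lemma psum_nonneg (hδ : 0 < δ) (hk : k ≤ T) : 0 ≤ psum B.σsq k :=
  (by positivity : 0 ≤ δ * k).trans (B.mul_le_psum hk)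

lemma exists_map_S_eq_gaussianReal (hk : k ≤ T) :
    ∃ μ v, P.map (B.S k) = gaussianReal μ v := by
  obtain ⟨μ, v, h⟩ := B.gaussian_lin fun i => if i = k then 1 else 0
  refine ⟨μ, v, ?_⟩
  simpa [ite_mul, Finset.sum_ite_eq', Nat.lt_succ_of_le hk] using h

lemma memLp_S (hk : k ≤ T) {p : ℝ≥0∞} (hp : p ≠ ∞) : MemLp (B.S k) p P := by
  obtain ⟨μ, v, h⟩ := B.exists_map_S_eq_gaussianReal hk
  have := memLp_id_gaussianReal' (μ := μ) (v := v) p hp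
  rwa [← h, memLp_map_measure_iff aestronglyMeasurable_id (B.meas_S k).aemeasurable] at this

lemma integrable_S (hk : k ≤ T) : Integrable (B.S k) P :=
  memLp_one_iff_integrable.1 (B.memLp_S hk ENNReal.one_ne_top)

lemma integral_S_sub (hT : psum B.σsq T ≠ 0) (hk : k ≤ T) :
    P[B.S k] - a = (b - a) * (psum B.σsq k / psum B.σsq T) := by
  rw [B.mean_S k hk]
  field_simp
  ring

lemma abs_integral_S_sub_le (hδ : 0 < δ) (hT : 1 ≤ T) (hk : k ≤ T) :
    |P[B.S k] - a| ≤ δ⁻¹ * δ⁻¹ * (|b - a| * k / T) := by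
  have hsT : δ * T ≤ psum B.σsq T := B.mul_le_psum le_rfl
  have hT₀ : 0 < δ * T := by positivity
  rw [B.integral_S_sub (hT₀.trans_le hsT).ne' hk, abs_mul,
    abs_of_nonneg (div_nonneg (B.psum_nonneg hδ hk) (hT₀.le.trans hsT))]
  calc |b - a| * (psum B.σsq k / psum B.σsq T) ≤ |b - a| * (δ⁻¹ * k / (δ * T)) := by
        gcongr
        exact B.psum_le hk
    _ = δ⁻¹ * δ⁻¹ * (|b - a| * k / T) := by
        field_simp

lemma variance_S_le (hδ : 0 < δ) (hk : k ≤ T) : Var[B.S k; P] ≤ δ⁻¹ * k := by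
  have hsk := B.psum_nonneg hδ hk
  have hsT := B.psum_nonneg hδ le_rfl
  rw [variance_eq_integral (B.meas_S k).aemeasurable]
  calc ∫ ω, (B.S k ω - P[B.S k]) ^ 2 ∂P
      = psum B.σsq k * (psum B.σsq T - psum B.σsq k) / psum B.σsq T := by
        simpa only [sq] using B.cov_S k k le_rfl hk
    _ ≤ psum B.σsq k := div_le_of_le_mul₀ hsT hsk (by nlinarith)
    _ ≤ δ⁻¹ * k := B.psum_le hk

variable [IsProbabilityMeasure P]

lemma measureReal_deviation_S_le (hδ : 0 < δ) (hk : k ≤ T) {t : ℝ} (ht : 0 < t) :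
    P.real {ω | t ≤ |B.S k ω - P[B.S k]|} ≤ δ⁻¹ * k / t ^ 2 := by
  refine ENNReal.toReal_le_of_le_ofReal (by positivity)
    ((meas_ge_le_variance_div_sq (B.memLp_S hk (by norm_num)) ht).trans
      (ENNReal.ofReal_le_ofReal ?_))
  gcongr
  exact B.variance_S_le hδ hk

lemma measureReal_compl_nonposEvent_le (hδ : δ ∈ Set.Ioo (0 : ℝ) (1 / 3)) {r : ℕ} (hr : 1 ≤ r)
    (hrT : r ≤ T) {t : ℝ} (ht : 0 < t)
    (hdrift : a + δ⁻¹ * δ⁻¹ * (|b - a| * r / T) + δ⁻¹ * r + 2 * t ≤ 0) :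
    P.real (B.nonposEvent r)ᶜ ≤ r * (δ⁻¹ * r / t ^ 2 + δ⁻¹ * exp (-t ^ δ)) := by
  obtain ⟨hδ₀, hδ₁⟩ := hδ
  have hδ' : 0 ≤ δ⁻¹ := inv_nonneg.2 hδ₀.le
  set θ : ℕ → ℝ := fun k => δ⁻¹ * ((min k (T - k) : ℕ) : ℝ) ^ ((1 : ℝ) / 2 - δ)
  have hsub : (B.nonposEvent r)ᶜ ⊆ ⋃ k ∈ Finset.Icc 1 r,
      ({ω | t ≤ |B.S k ω - P[B.S k]|} ∪ {ω | θ k + t < |B.D k ω|}) := by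
    refine compl_setOf_forall_add_nonpos_subset B.S B.D _ θ fun k hk₁ hkr => ?_
    have hmean := (abs_le.1 (B.abs_integral_S_sub_le hδ₀ (hr.trans hrT) (hkr.trans hrT))).2
    have hθ : ((min k (T - k) : ℕ) : ℝ) ^ ((1 : ℝ) / 2 - δ) ≤ r :=
      rpow_le_of_le_of_exponent_le_one (Nat.cast_nonneg _)
        (by exact_mod_cast (min_le_left _ _).trans hkr) (by exact_mod_cast hr)
        (by linarith) (by linarith)
    have hk : δ⁻¹ * δ⁻¹ * (|b - a| * k / T) ≤ δ⁻¹ * δ⁻¹ * (|b - a| * r / T) := by gcongr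
    linarith [mul_le_mul_of_nonneg_left hθ hδ']
  calc P.real (B.nonposEvent r)ᶜ
      ≤ ∑ k ∈ Finset.Icc 1 r, (P.real {ω | t ≤ |B.S k ω - P[B.S k]|}
          + P.real {ω | θ k + t < |B.D k ω|}) :=
        (measureReal_mono hsub (measure_ne_top _ _)).trans
          ((measureReal_biUnion_finset_le _ _).trans
            (Finset.sum_le_sum fun k _ => measureReal_union_le _ _))
    _ ≤ ∑ _k ∈ Finset.Icc 1 r, (δ⁻¹ * r / t ^ 2 + δ⁻¹ * exp (-t ^ δ)) := by
        refine Finset.sum_le_sum fun k hk => ?_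
        obtain ⟨hk₁, hkr⟩ := Finset.mem_Icc.1 hk
        refine add_le_add ((B.measureReal_deviation_S_le hδ₀ (hkr.trans hrT) ht).trans ?_)
          (B.dec_tail k hk₁ (hkr.trans hrT) t ht)
        gcongr
    _ = r * (δ⁻¹ * r / t ^ 2 + δ⁻¹ * exp (-t ^ δ)) := by simp [mul_add]

lemma abs_ell_sub_le (hδ : δ ∈ Set.Ioo (0 : ℝ) (1 / 3)) {r : ℕ} (hr : 1 ≤ r) (hrT : r ≤ T)
    {t : ℝ} (ht : 0 < t) (hdrift : a + δ⁻¹ * δ⁻¹ * (|b - a| * r / T) + δ⁻¹ * r + 2 * t ≤ 0) :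
    |B.ell r - nneg a| ≤ δ⁻¹ * r + 1 + δ⁻¹ * δ⁻¹ * (|b - a| * r / T)
      + nneg a * (r * (δ⁻¹ * r / t ^ 2 + δ⁻¹ * exp (-t ^ δ))) :=
  calc |B.ell r - nneg a| ≤ ∫ ω, |B.S r ω - a| ∂P + nneg a * P.real (B.nonposEvent r)ᶜ :=
        abs_integral_nneg_mul_indicator_sub_le (B.integrable_S hrT)
          (B.measurableSet_nonposEvent r) a
    _ ≤ Var[B.S r; P] + 1 + |P[B.S r] - a| + nneg a * P.real (B.nonposEvent r)ᶜ :=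
        add_le_add_left (integral_abs_sub_le (B.memLp_S hrT (by norm_num)) a) _
    _ ≤ _ := add_le_add
        (add_le_add (add_le_add_left (B.variance_S_le hδ.1 hrT) 1)
          (B.abs_integral_S_sub_le hδ.1 (hr.trans hrT) hrT))
        (mul_le_mul_of_nonneg_left (B.measureReal_compl_nonposEvent_le hδ hr hrT ht hdrift)
          (nneg_nonneg a))

lemma abs_ell_div_sub_one_le (hδ : δ ∈ Set.Ioo (0 : ℝ) (1 / 3)) {r : ℕ} (hr : 1 ≤ r)
    (hrT : r ≤ T) (ha : a < 0) {c : ℝ} (hb : |b - a| * r / T ≤ c)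
    (hdrift : δ⁻¹ * δ⁻¹ * c + δ⁻¹ * r ≤ -a / 2) :
    |B.ell r / nneg a - 1| ≤ (δ⁻¹ * r + 1 + δ⁻¹ * δ⁻¹ * c) / -a
      + r * (16 * (δ⁻¹ * r)) / (-a) ^ 2 + r * δ⁻¹ * exp (-(-a / 4) ^ δ) := by
  have hm : 0 < -a := neg_pos.2 ha
  have hna : nneg a = -a := max_eq_left hm.le
  have hbc : δ⁻¹ * δ⁻¹ * (|b - a| * r / T) ≤ δ⁻¹ * δ⁻¹ * c :=
    mul_le_mul_of_nonneg_left hb (mul_self_nonneg _)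
  have h := B.abs_ell_sub_le hδ hr hrT (t := -a / 4) (by positivity) (by linarith)
  have hsplit : -a * (r * (δ⁻¹ * r / (-a / 4) ^ 2 + δ⁻¹ * exp (-(-a / 4) ^ δ)))
      = (r * (16 * (δ⁻¹ * r)) / (-a) ^ 2 + r * δ⁻¹ * exp (-(-a / 4) ^ δ)) * -a := by
    field_simp
    ring
  rw [hna, hsplit] at h
  rw [hna, div_sub_one hm.ne', abs_div, abs_of_pos hm, div_le_iff₀ hm, add_assoc, add_mul,
    div_mul_cancel₀ _ hm.ne']
  linarith

end DecoratedBridge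

/-- for a fixed number of steps `r`, `ℓ_{T,r}(a,b) ∼ a⁻` as `a → −∞`. -/
theorem drw_ell_asymp (δ : ℝ) (hδ : δ ∈ Set.Ioo (0 : ℝ) (1 / 3)) (r : ℕ) (hr : 1 ≤ r) :
    ∀ ε : ℝ, 0 < ε → ∃ A : ℝ,
      ∀ a : ℝ, a ≤ -A → ∀ T : ℕ, r ≤ T → ∀ b : ℝ,
        |b - a| * r / T ≤ (nneg a + 1) ^ (1 - δ) →
      ∀ (Ω : Type) [MeasurableSpace Ω] (P : Measure Ω) [IsProbabilityMeasure P]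
        (B : DecoratedBridge δ T a b P),
      |B.ell r / nneg a - 1| ≤ ε := by
  intro ε hε
  have hdrift := (tendsto_affine_rpow_div_atTop hδ.1 (δ⁻¹ * r) (δ⁻¹ * δ⁻¹)).eventually
    (eventually_le_nhds one_half_pos)
  have herr := (tendsto_error_atTop hδ.1 (δ⁻¹ * r + 1) (δ⁻¹ * δ⁻¹) (r * (16 * (δ⁻¹ * r)))
    (r * δ⁻¹)).eventually (eventually_le_nhds hε)
  obtain ⟨A, hA⟩ := eventually_atTop.1 ((eventually_gt_atTop 0).and (hdrift.and herr))
  refine ⟨A, fun a ha T hrT b hb Ω _ P _ B => ?_⟩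
  obtain ⟨hm, hdrift, herr⟩ := hA (-a) (by linarith)
  rw [show nneg a = -a from max_eq_left hm.le] at hb
  rw [div_le_iff₀ hm] at hdrift
  exact (B.abs_ell_div_sub_one_le hδ hr hrT (by linarith) hb (by linarith)).trans herr
end
end

section
/- Let g := 2/π and for a real ℓ ≥ 0 set m_ℓ := 2·√g·ℓ − (3/4)·√g·log⁺ ℓ, where log⁺ x := max(log x, 0). For reals 0 ≤ k < ℓ < n define the linear interpolation m̂_ℓ := ((ℓ − k)·m_n + (n − ℓ)·m_k)/(n − k). Then for all reals 0 ≤ k < ℓ < n < ∞ one has −2·√g ≤ m̂_ℓ − m_ℓ ≤ (3/2)·√g·log⁺( min(ℓ − k, n − ℓ) ) + (3/2)·√g. -/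
/-!
Since `m_ℓ = 2√g·ℓ − (3/4)√g·log⁺ ℓ` and the linear part is reproduced exactly by interpolation,
`m̂_ℓ − m_ℓ` is `(3/4)√g` times the gap between `log⁺ ℓ` and its chord over `[k, n]`. Both bounds on
that gap follow from two elementary facts about `log⁺`: it is monotone on `[0, ∞)`, and
`log⁺ y ≤ log⁺ x + (y − x)/x` for `0 < x ≤ y` (from `log⁺ (x·y) ≤ log⁺ x + log⁺ y` and
`log z ≤ z − 1`). For the upper bound one also splits `ℓ = k + (ℓ − k)` with
`log⁺ (a + b) ≤ log 2 + log⁺ a + log⁺ b`.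
-/

noncomputable section

/-- `m ℓ = 2·√g·ℓ − (3/4)·√g·log⁺ ℓ` with `g = 2/π` (here `log⁺ x = max (log x) 0`,
which equals `0` at `x = 0` since `Real.log 0 = 0`). -/
def mfun (x : ℝ) : ℝ :=
  2 * Real.sqrt (2 / Real.pi) * x - 3 / 4 * Real.sqrt (2 / Real.pi) * max (Real.log x) 0

open Real

/-- The paper's `m̂_ℓ` is `chordAt mfun k n ℓ`. -/
def chordAt (f : ℝ → ℝ) (k n ℓ : ℝ) : ℝ :=
  ((ℓ - k) * f n + (n - ℓ) * f k) / (n - k)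

namespace Real

theorem posLog_le_sub_one {x : ℝ} (hx : 1 ≤ x) : log⁺ x ≤ x - 1 := by
  rw [posLog_eq_log (by rwa [abs_of_nonneg (by linarith)])]
  exact log_le_sub_one_of_pos (by linarith)

theorem posLog_le_posLog_add_div {x y : ℝ} (hx : 0 < x) (hxy : x ≤ y) :
    log⁺ y ≤ log⁺ x + (y - x) / x :=
  calc log⁺ y = log⁺ (x * (y / x)) := by rw [mul_div_cancel₀ y hx.ne']
    _ ≤ log⁺ x + log⁺ (y / x) := posLog_mul
    _ ≤ log⁺ x + (y / x - 1) := by gcongr; exact posLog_le_sub_one ((one_le_div hx).2 hxy)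
    _ = log⁺ x + (y - x) / x := by rw [sub_div, div_self hx.ne']

theorem chordAt_posLog_le_add_one {k ℓ n : ℝ} (hk : 0 ≤ k) (hkl : k < ℓ) (hln : ℓ ≤ n) :
    chordAt posLog k n ℓ ≤ log⁺ ℓ + 1 := by
  have hℓ : 0 < ℓ := hk.trans_lt hkl
  have hk_le : log⁺ k ≤ log⁺ ℓ := posLog_le_posLog hk hkl.le
  have hn_le : log⁺ n ≤ log⁺ ℓ + (n - ℓ) / ℓ := posLog_le_posLog_add_div hℓ hln
  -- the increment `(n - ℓ) / ℓ` carries weight `(ℓ - k) / (n - k)`, and `(ℓ - k) / ℓ ≤ 1`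
  have hweight : (ℓ - k) * ((n - ℓ) / ℓ) ≤ n - k := by
    rw [mul_div_left_comm, ← mul_div_assoc, div_le_iff₀ hℓ]
    nlinarith
  rw [chordAt, div_le_iff₀ (by linarith)]
  nlinarith

theorem posLog_sub_chordAt_le {k ℓ n : ℝ} (hk : 0 ≤ k) (hkl : k < ℓ) (hln : ℓ < n) :
    log⁺ ℓ - chordAt posLog k n ℓ ≤ log⁺ (min (ℓ - k) (n - ℓ)) + 1 := by
  set u := ℓ - k
  set t := n - ℓ
  have hu : 0 < u := by linarith
  have ht : 0 < t := by linarith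
  have hnk : n - k = u + t := by ring
  have hk_le : log⁺ k ≤ log⁺ ℓ := posLog_le_posLog hk hkl.le
  have hn_ge : log⁺ ℓ ≤ log⁺ n := posLog_le_posLog (by linarith) hln.le
  have hsplit : log⁺ ℓ ≤ log 2 + log⁺ k + log⁺ u := by
    simpa [u] using posLog_add (x := k) (y := u)
  have hlog2 : log 2 < 1 := by linarith [log_two_lt_d9]
  have hchord : log⁺ ℓ - chordAt posLog k n ℓ ≤ t * (log⁺ ℓ - log⁺ k) / (u + t) := by
    rw [chordAt, hnk, sub_le_iff_le_add, ← add_div, le_div_iff₀ (by positivity)]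
    nlinarith
  refine hchord.trans ((div_le_iff₀ (by positivity)).2 ?_)
  rcases le_total u t with hut | htu
  · rw [min_eq_left hut]
    nlinarith [posLog_nonneg (x := u)]
  · rw [min_eq_right htu]
    have hu_le : log⁺ u ≤ log⁺ t + (u - t) / t := posLog_le_posLog_add_div ht htu
    have htu_mul : t * log⁺ u ≤ t * log⁺ t + (u - t) := by
      have h := mul_le_mul_of_nonneg_left hu_le ht.le
      rwa [mul_add, mul_div_cancel₀ _ ht.ne'] at h
    nlinarith [posLog_nonneg (x := t)]

end Real

theorem mfun_eq (x : ℝ) : mfun x = 2 * √(2 / π) * x - 3 / 4 * √(2 / π) * log⁺ x := by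
  rw [mfun, posLog_apply, max_comm]

theorem chordAt_mfun_sub_mfun {k ℓ n : ℝ} (hkn : k < n) :
    chordAt mfun k n ℓ - mfun ℓ = 3 / 4 * √(2 / π) * (log⁺ ℓ - chordAt posLog k n ℓ) := by
  have : n - k ≠ 0 := by linarith
  simp only [chordAt, mfun_eq]
  field_simp
  ring

/-- bounds on the difference between the linear interpolation
`m̂_ℓ = ((ℓ−k)·m_n + (n−ℓ)·m_k)/(n−k)` and `m_ℓ`. -/
theorem mhat_sub_m_bounds (k ℓ n : ℝ) (hk : 0 ≤ k) (hkl : k < ℓ) (hln : ℓ < n) :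
    -(2 * Real.sqrt (2 / Real.pi))
        ≤ ((ℓ - k) * mfun n + (n - ℓ) * mfun k) / (n - k) - mfun ℓ ∧
      ((ℓ - k) * mfun n + (n - ℓ) * mfun k) / (n - k) - mfun ℓ
        ≤ 3 / 2 * Real.sqrt (2 / Real.pi) * max (Real.log (min (ℓ - k) (n - ℓ))) 0
          + 3 / 2 * Real.sqrt (2 / Real.pi) := by
  change -(2 * √(2 / π)) ≤ chordAt mfun k n ℓ - mfun ℓ ∧
    chordAt mfun k n ℓ - mfun ℓ ≤ 3 / 2 * √(2 / π) * max (log (min (ℓ - k) (n - ℓ))) 0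
      + 3 / 2 * √(2 / π)
  rw [chordAt_mfun_sub_mfun (hkl.trans hln), max_comm, ← posLog_apply]
  have hc : 0 ≤ √(2 / π) := sqrt_nonneg _
  have hlower := chordAt_posLog_le_add_one hk hkl hln.le
  have hupper := posLog_sub_chordAt_le hk hkl hln
  have hmin := posLog_nonneg (x := min (ℓ - k) (n - ℓ))
  constructor <;> nlinarith
end
end
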